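/- For every real α with 0 < α ≤ 1/2, the function h_α(u) = (1 − u^α)^(1/α) / f_JS(u) is nonincreasing (antitone) on the interval [0,1): for all u, v with 0 ≤ u ≤ v < 1, h_α(v) ≤ h_α(u). -/

import Mathlib

noncomputable def fJS (u : ℝ) : ℝ :=
  (1 / 2) * ((1 + u) + u * Real.logb 2 u - (1 + u) * Real.logb 2 (1 + u))

/-!
Substituting `u = s²` and `δ = 2α` factors `h_α(s²) = 2 log 2 · A(s)² · B(s)` with
`A(s) = (1 - s^δ)^(1/δ) / (1 - s)` and `B(s) = (1 - s)² / J(s²)`, where `J = 2 log 2 · f_JS`;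
both factors are nonnegative and antitone on `[0, 1)`.
`A'` has the sign of `1 - s^(δ-1)`, which is `≤ 0` since `δ ≤ 1`.
`B' = -2 (1 - s²) k(s) / J(s²)²` with `k(s) = log (2 / (1 + s²)) + 2 s log s / (1 + s)`,
and `k ≥ 0` on `(0, 1]` because `k(1) = 0` and
`k' = 2 (log s + (1 - s²)/(1 + s²)) / (1 + s)² ≤ 0` by `log t ≤ 2 (t - 1)/(t + 1)` at `t = s²`.
-/

open Real Set

noncomputable def jsNat (x : ℝ) : ℝ := (1 + x) * log 2 + x * log x - (1 + x) * log (1 + x)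

lemma fJS_eq_jsNat_div (x : ℝ) : fJS x = jsNat x / (2 * log 2) := by
  have : log 2 ≠ 0 := (log_pos one_lt_two).ne'
  unfold fJS jsNat logb
  field_simp

lemma continuous_jsNat : Continuous jsNat := by
  unfold jsNat
  fun_prop

lemma hasDerivAt_jsNat {x : ℝ} (hx : 0 < x) :
    HasDerivAt jsNat (log 2 + log x - log (1 + x)) x := by
  refine ((((hasDerivAt_id x).const_add 1).mul_const (log 2)).add (hasDerivAt_mul_log hx.ne')
    |>.sub ((hasDerivAt_mul_log (by positivity : 1 + x ≠ 0)).comp x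
      ((hasDerivAt_id x).const_add 1))).congr_deriv ?_
  ring

lemma jsNat_pos {x : ℝ} (hx₀ : 0 ≤ x) (hx₁ : x < 1) : 0 < jsNat x := by
  have hanti : StrictAntiOn jsNat (Icc 0 1) := by
    refine strictAntiOn_of_hasDerivWithinAt_neg (convex_Icc 0 1) continuous_jsNat.continuousOn
      (fun y hy ↦ by
        rw [interior_Icc] at hy
        exact (hasDerivAt_jsNat hy.1).hasDerivWithinAt) ?_
    intro y hy
    rw [interior_Icc, mem_Ioo] at hy
    have : log (2 * y) < log (1 + y) := log_lt_log (by linarith) (by linarith)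
    rw [log_mul two_ne_zero hy.1.ne'] at this
    linarith
  have h₁ : jsNat 1 = 0 := by norm_num [jsNat]
  exact h₁ ▸ hanti ⟨hx₀, hx₁.le⟩ ⟨zero_le_one, le_rfl⟩ hx₁

lemma log_le_two_mul_sub_one_div_add_one {t : ℝ} (ht₀ : 0 < t) (ht₁ : t ≤ 1) :
    log t ≤ 2 * (t - 1) / (t + 1) := by
  let f : ℝ → ℝ := fun x ↦ log x - 2 * (x - 1) / (x + 1)
  have hf : ∀ x ∈ Ioc (0 : ℝ) 1, HasDerivAt f ((x - 1) ^ 2 / (x * (x + 1) ^ 2)) x := by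
    rintro x ⟨hx₀, -⟩
    have hx₁ : x + 1 ≠ 0 := by positivity
    refine ((hasDerivAt_log hx₀.ne').sub ((((hasDerivAt_id x).sub_const 1).const_mul 2).div
      ((hasDerivAt_id x).add_const 1) hx₁)).congr_deriv ?_
    simp only [id]
    field_simp
    ring
  have hmono : MonotoneOn f (Ioc 0 1) :=
    monotoneOn_of_hasDerivWithinAt_nonneg (convex_Ioc 0 1)
      (fun x hx ↦ (hf x hx).continuousAt.continuousWithinAt)
      (fun x hx ↦ by
        rw [interior_Ioc] at hx
        exact (hf x (Ioo_subset_Ioc_self hx)).hasDerivWithinAt)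
      (fun x hx ↦ by
        rw [interior_Ioc, mem_Ioo] at hx
        have := hx.1
        positivity)
  have h₁ : f 1 = 0 := by norm_num [f]
  exact sub_nonpos.1 (h₁ ▸ hmono ⟨ht₀, ht₁⟩ ⟨one_pos, le_rfl⟩ ht₁)

noncomputable def jsSqRatioFactor (s : ℝ) : ℝ :=
  log 2 - log (1 + s ^ 2) + 2 * (s * log s) / (1 + s)

lemma hasDerivAt_jsSqRatioFactor {s : ℝ} (hs : 0 < s) :
    HasDerivAt jsSqRatioFactor (2 * (log s + (1 - s ^ 2) / (1 + s ^ 2)) / (1 + s) ^ 2) s := by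
  have hsq : HasDerivAt (fun x : ℝ ↦ 1 + x ^ 2) (2 * s) s := by
    simpa using (hasDerivAt_pow 2 s).const_add 1
  refine (((hsq.log (by positivity)).const_sub (log 2)).add
    (((hasDerivAt_mul_log hs.ne').const_mul 2).div ((hasDerivAt_id s).const_add 1)
      (by positivity))).congr_deriv ?_
  simp only [id]
  field_simp
  ring

lemma jsSqRatioFactor_nonneg {s : ℝ} (hs₀ : 0 < s) (hs₁ : s ≤ 1) : 0 ≤ jsSqRatioFactor s := by
  have hanti : AntitoneOn jsSqRatioFactor (Ioc 0 1) := by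
    refine antitoneOn_of_hasDerivWithinAt_nonpos (convex_Ioc 0 1)
      (fun x hx ↦ (hasDerivAt_jsSqRatioFactor hx.1).continuousAt.continuousWithinAt)
      (fun x hx ↦ by
        rw [interior_Ioc] at hx
        exact (hasDerivAt_jsSqRatioFactor hx.1).hasDerivWithinAt) ?_
    intro x hx
    rw [interior_Ioc, mem_Ioo] at hx
    have hlog := log_le_two_mul_sub_one_div_add_one (pow_pos hx.1 2) (by nlinarith)
    rw [log_pow, Nat.cast_ofNat, mul_div_assoc] at hlog
    have : (1 - x ^ 2) / (1 + x ^ 2) = -((x ^ 2 - 1) / (x ^ 2 + 1)) := by ring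
    exact div_nonpos_of_nonpos_of_nonneg (by linarith) (by positivity)
  have h₁ : jsSqRatioFactor 1 = 0 := by norm_num [jsSqRatioFactor]
  exact h₁ ▸ hanti ⟨hs₀, hs₁⟩ ⟨one_pos, le_rfl⟩ hs₁

noncomputable def jsSqRatio (s : ℝ) : ℝ := (1 - s) ^ 2 / jsNat (s ^ 2)

lemma hasDerivAt_jsSqRatio {s : ℝ} (hs₀ : 0 < s) (hs₁ : s < 1) :
    HasDerivAt jsSqRatio (-2 * (1 - s ^ 2) * jsSqRatioFactor s / jsNat (s ^ 2) ^ 2) s := by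
  have hpos : 0 < jsNat (s ^ 2) := jsNat_pos (by positivity) (by nlinarith)
  have hsq : HasDerivAt (fun x : ℝ ↦ x ^ 2) (2 * s) s := by simpa using hasDerivAt_pow 2 s
  have hG : jsNat (s ^ 2) = (1 + s ^ 2) * (log 2 - log (1 + s ^ 2)) + 2 * s ^ 2 * log s := by
    rw [jsNat, log_pow]; push_cast; ring
  have hnum : HasDerivAt (fun x : ℝ ↦ (1 - x) ^ 2) (-2 * (1 - s)) s :=
    (((hasDerivAt_id s).const_sub 1).pow 2).congr_deriv (by simp only [id]; ring)
  have hden : HasDerivAt (fun x ↦ jsNat (x ^ 2))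
      ((log 2 + log (s ^ 2) - log (1 + s ^ 2)) * (2 * s)) s :=
    (hasDerivAt_jsNat (by positivity)).comp (h := fun x : ℝ ↦ x ^ 2) s hsq
  refine (hnum.div hden hpos.ne').congr_deriv ?_
  simp only [jsSqRatioFactor, log_pow]
  field_simp
  rw [hG]
  push_cast
  ring

lemma antitoneOn_jsSqRatio : AntitoneOn jsSqRatio (Ico 0 1) := by
  refine antitoneOn_of_hasDerivWithinAt_nonpos (convex_Ico 0 1) ?_
    (fun x hx ↦ by
      rw [interior_Ico] at hx
      exact (hasDerivAt_jsSqRatio hx.1 hx.2).hasDerivWithinAt) ?_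
  · exact ((continuous_const.sub continuous_id).pow 2).continuousOn.div
      (continuous_jsNat.comp (continuous_pow 2)).continuousOn
      (fun x hx ↦ (jsNat_pos (by positivity) (by nlinarith [hx.1, hx.2])).ne')
  · intro x hx
    rw [interior_Ico, mem_Ioo] at hx
    have := jsSqRatioFactor_nonneg hx.1 hx.2.le
    have : 0 ≤ 1 - x ^ 2 := by nlinarith
    exact div_nonpos_of_nonpos_of_nonneg (by nlinarith) (by positivity)

noncomputable def rpowRatio (δ s : ℝ) : ℝ := (1 - s ^ δ) ^ (1 / δ) / (1 - s)

lemma hasDerivAt_rpowRatio {δ s : ℝ} (hδ : 0 < δ) (hs₀ : 0 < s) (hs₁ : s < 1) :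
    HasDerivAt (rpowRatio δ) ((1 - s ^ δ) ^ (1 / δ - 1) * (1 - s ^ (δ - 1)) / (1 - s) ^ 2) s := by
  have hpos : 0 < 1 - s ^ δ := sub_pos.2 (rpow_lt_one hs₀.le hs₁ hδ)
  have hnum := ((hasDerivAt_rpow_const (p := δ) (Or.inl hs₀.ne')).const_sub 1).rpow_const
    (p := 1 / δ) (Or.inl hpos.ne')
  refine (hnum.div ((hasDerivAt_id s).const_sub 1) (sub_pos.2 hs₁).ne').congr_deriv ?_
  rw [rpow_sub_one hpos.ne', rpow_sub_one hs₀.ne']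
  simp only [id]
  field_simp
  ring

lemma antitoneOn_rpowRatio {δ : ℝ} (hδ₀ : 0 < δ) (hδ₁ : δ ≤ 1) :
    AntitoneOn (rpowRatio δ) (Ico 0 1) := by
  refine antitoneOn_of_hasDerivWithinAt_nonpos (convex_Ico 0 1) ?_
    (fun x hx ↦ by
      rw [interior_Ico] at hx
      exact (hasDerivAt_rpowRatio hδ₀ hx.1 hx.2).hasDerivWithinAt) ?_
  · refine ContinuousOn.div (fun x _ ↦ ?_) (by fun_prop) (fun x hx ↦ (sub_pos.2 hx.2).ne')
    exact ((continuousAt_const.sub (continuousAt_rpow_const x δ (Or.inr hδ₀.le))).rpow_const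
      (Or.inr (by positivity))).continuousWithinAt
  · intro x hx
    rw [interior_Ico, mem_Ioo] at hx
    have : 1 ≤ x ^ (δ - 1) := one_le_rpow_of_pos_of_le_one_of_nonpos hx.1 hx.2.le (by linarith)
    have : 0 ≤ (1 - x ^ δ) ^ (1 / δ - 1) :=
      rpow_nonneg (sub_nonneg.2 (rpow_le_one hx.1.le hx.2.le hδ₀.le)) _
    exact div_nonpos_of_nonpos_of_nonneg (mul_nonpos_of_nonneg_of_nonpos this (by linarith))
      (by positivity)

lemma rpowRatio_nonneg {δ s : ℝ} (hδ : 0 ≤ δ) (hs : s ∈ Ico (0 : ℝ) 1) : 0 ≤ rpowRatio δ s :=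
  div_nonneg (rpow_nonneg (sub_nonneg.2 (rpow_le_one hs.1 hs.2.le hδ)) _) (sub_nonneg.2 hs.2.le)

lemma jsSqRatio_nonneg {s : ℝ} (hs : s ∈ Ico (0 : ℝ) 1) : 0 ≤ jsSqRatio s :=
  div_nonneg (sq_nonneg _) (jsNat_pos (sq_nonneg s) (by nlinarith [hs.1, hs.2])).le

lemma antitoneOn_rpowRatio_sq_mul_jsSqRatio {δ : ℝ} (hδ₀ : 0 < δ) (hδ₁ : δ ≤ 1) :
    AntitoneOn (fun s ↦ rpowRatio δ s ^ 2 * jsSqRatio s) (Ico 0 1) := fun _ hs _ ht hst ↦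
  mul_le_mul
    (pow_le_pow_left₀ (rpowRatio_nonneg hδ₀.le ht) (antitoneOn_rpowRatio hδ₀ hδ₁ hs ht hst) 2)
    (antitoneOn_jsSqRatio hs ht hst) (jsSqRatio_nonneg ht) (sq_nonneg _)

lemma rpow_div_fJS_sq_eq {α s : ℝ} (hα : 0 < α) (hs₀ : 0 ≤ s) (hs₁ : s < 1) :
    (1 - (s ^ 2) ^ α) ^ (1 / α) / fJS (s ^ 2) =
      2 * log 2 * (rpowRatio (2 * α) s ^ 2 * jsSqRatio s) := by
  have hpos : 0 ≤ 1 - s ^ (2 * α) := sub_nonneg.2 (rpow_le_one hs₀ hs₁.le (by positivity))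
  have hroot : (1 - s ^ (2 * α)) ^ (1 / α) = ((1 - s ^ (2 * α)) ^ (1 / (2 * α))) ^ 2 := by
    rw [← rpow_natCast, ← rpow_mul hpos]
    congr 1
    field_simp
    norm_num
  have hs : 1 - s ≠ 0 := (sub_pos.2 hs₁).ne'
  have hG : jsNat (s ^ 2) ≠ 0 := (jsNat_pos (sq_nonneg s) (by nlinarith)).ne'
  have : log 2 ≠ 0 := (log_pos one_lt_two).ne'
  have hsα : (s ^ 2) ^ α = s ^ (2 * α) := by
    rw [← rpow_natCast, ← rpow_mul hs₀, Nat.cast_ofNat]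
  rw [hsα, hroot, fJS_eq_jsNat_div, rpowRatio, jsSqRatio, div_pow]
  field_simp

theorem stmt_7 (α : ℝ) (hα₀ : 0 < α) (hα₁ : α ≤ 1 / 2) :
    ∀ u v : ℝ, 0 ≤ u → u ≤ v → v < 1 →
      (1 - v ^ α) ^ (1 / α) / fJS v ≤ (1 - u ^ α) ^ (1 / α) / fJS u := by
  intro u v hu huv hv
  have hv₀ : 0 ≤ v := hu.trans huv
  have hsqrt : ∀ x, 0 ≤ x → x < 1 → √x ∈ Ico (0 : ℝ) 1 := fun x _ hx ↦
    ⟨sqrt_nonneg x, (sqrt_lt' one_pos).2 (by rwa [one_pow])⟩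
  have hu' := hsqrt u hu (huv.trans_lt hv)
  have hv' := hsqrt v hv₀ hv
  rw [← sq_sqrt hu, ← sq_sqrt hv₀, rpow_div_fJS_sq_eq hα₀ hu'.1 hu'.2,
    rpow_div_fJS_sq_eq hα₀ hv'.1 hv'.2]
  exact mul_le_mul_of_nonneg_left
    (antitoneOn_rpowRatio_sq_mul_jsSqRatio (by positivity) (by linarith) hu' hv' (sqrt_le_sqrt huv))
    (by positivity)
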